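/- arXiv:2308.05284 — 3 statements merged into one kernel-verified Lean document; each statement's English description precedes it below -/
import Mathlib

section
/- Let f : ℂⁿ → ℂ^{2n} be a polynomial map with f(0)=0 such that 0 < dim_ℂ(D/I_Δ) < ∞ (which holds when f is A-finite but not stable). Then the radical of I_Δ equals the diagonal ideal D, and there exists an ideal Q of R = ℂ⟦x₁,…,xₙ,x₁',…,xₙ'⟧, primary with radical equal to the maximal ideal of R, such that I_Δ = D ∩ Q. -/
/- STATEMENT 2: If `f : ℂⁿ → ℂ^{2n}` is polynomial with `f 0 = 0` and
`0 < dim_ℂ (D / I_Δ) < ∞`, then `√(I_Δ) = D` and `I_Δ = D ∩ Q` for some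
ideal `Q` primary with radical the maximal ideal `⟨x₁,…,xₙ,x₁',…,xₙ'⟩`
of `R = ℂ⟦x,x'⟧`. -/

set_option synthInstance.maxHeartbeats 1000000

noncomputable section

open MvPowerSeries

/-- The local ring `R = ℂ⟦x₁,…,xₙ,x₁',…,xₙ'⟧`. -/
abbrev DPRing (n : ℕ) : Type := MvPowerSeries (Fin n ⊕ Fin n) ℂ

/-- The diagonal ideal `D = ⟨x₁ - x₁', …, xₙ - xₙ'⟩`. -/
def diagIdeal (n : ℕ) : Ideal (DPRing n) :=
  Ideal.span (Set.range fun j : Fin n =>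
    (X (Sum.inl j) - X (Sum.inr j) : DPRing n))

/-- The maximal ideal of `R`, generated by all `2n` variables. -/
def maxIdeal (n : ℕ) : Ideal (DPRing n) :=
  Ideal.span (Set.range fun s : Fin n ⊕ Fin n => (X s : DPRing n))

/-- `f_i(x) - f_i(x')` as an element of `R = ℂ⟦x,x'⟧`. -/
def doublePointGen (n : ℕ) (F : Fin (2 * n) → MvPolynomial (Fin n) ℂ)
    (i : Fin (2 * n)) : DPRing n :=
  MvPolynomial.aeval (fun j : Fin n => (X (Sum.inl j) : DPRing n)) (F i) -
    MvPolynomial.aeval (fun j : Fin n => (X (Sum.inr j) : DPRing n)) (F i)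

/-- The ideal `I_Δ = ⟨f₁(x) - f₁(x'), …, f_{2n}(x) - f_{2n}(x')⟩`. -/
def IDelta (n : ℕ) (F : Fin (2 * n) → MvPolynomial (Fin n) ℂ) : Ideal (DPRing n) :=
  Ideal.span (Set.range (doublePointGen n F))

/-! After the change of variables `xᵢ ↦ xᵢ - xᵢ'` the diagonal ideal `D` becomes `⟨x₁, …, xₙ⟩`,
the kernel of setting the unprimed variables to zero, so `D` is prime. As `D/I_Δ` is
finite-dimensional, Nakayama over the local ring `R/I_Δ` gives `m^k D ⊆ I_Δ`, and Artin–Rees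
gives `D ∩ m^N ⊆ m^k D` for large `N`. Then `Q = I_Δ + m^N` is `m`-primary and, by modularity,
`D ∩ Q = I_Δ + D ∩ m^N = I_Δ`; finally `√I_Δ = D ∩ m = D`. -/

namespace MvPowerSeries

variable {σ R : Type*}

open Classical in
theorem mem_span_X_image_of_coeff_eq_zero [CommSemiring R] (S : Finset σ)
    {f : MvPowerSeries σ R} (hf : ∀ e : σ →₀ ℕ, (∀ s ∈ S, e s = 0) → coeff e f = 0) :
    f ∈ Ideal.span (X '' S) := by
  let owner (e : σ →₀ ℕ) : Option σ :=
    if h : ∃ s ∈ S, e s ≠ 0 then some h.choose else none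
  have owner_spec {e s} (h : owner e = some s) : s ∈ S ∧ e s ≠ 0 := by
    simp only [owner] at h
    split_ifs at h with he
    cases h
    exact he.choose_spec
  let part (s : σ) : MvPowerSeries σ R := fun e => if owner e = some s then coeff e f else 0
  have hpart : f = ∑ s ∈ S, part s := by
    ext e
    rw [map_sum]
    change _ = ∑ s ∈ S, if owner e = some s then coeff e f else 0
    by_cases he : ∃ s ∈ S, e s ≠ 0
    · have hs : owner e = some he.choose := dif_pos he
      simp only [hs, Option.some.injEq, Finset.sum_ite_eq, if_pos he.choose_spec.1]
    · push Not at he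
      have hs : owner e = none := dif_neg (by simpa using he)
      simp [hs, hf e he]
  rw [hpart]
  refine Ideal.sum_mem _ fun s hs => ?_
  obtain ⟨g, hg⟩ : X s ∣ part s := X_dvd_iff.mpr fun e he => by
    change (if owner e = some s then coeff e f else 0) = 0
    exact if_neg fun h => (owner_spec h).2 he
  rw [hg]
  exact Ideal.mul_mem_right _ _ (Ideal.subset_span ⟨s, hs, rfl⟩)

theorem span_range_X_eq_ker_constantCoeff [Fintype σ] [CommRing R] :
    Ideal.span (Set.range X) = RingHom.ker (constantCoeff : MvPowerSeries σ R →+* R) := by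
  refine le_antisymm (Ideal.span_le.mpr ?_) fun f hf => ?_
  · rintro _ ⟨s, rfl⟩
    simp
  · have := mem_span_X_image_of_coeff_eq_zero Finset.univ (f := f) fun e he => by
      rw [show e = 0 from Finsupp.ext fun s => he s (Finset.mem_univ s)]
      exact hf
    simpa using this

theorem span_range_X_eq_maximalIdeal {K : Type*} [Field K] [Fintype σ] :
    Ideal.span (Set.range X) = IsLocalRing.maximalIdeal (MvPowerSeries σ K) :=
  IsLocalRing.eq_maximalIdeal <| by
    rw [span_range_X_eq_ker_constantCoeff]
    exact RingHom.ker_isMaximal_of_surjective _ fun c => ⟨C c, by simp⟩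

section Shear

variable {ι R : Type*} [CommRing R]

noncomputable def shearVars (c : R) : ι ⊕ ι → MvPowerSeries (ι ⊕ ι) R :=
  Sum.elim (fun i => X (Sum.inl i) + C c * X (Sum.inr i)) (fun i => X (Sum.inr i))

@[simp]
theorem shearVars_inl (c : R) (i : ι) :
    shearVars c (Sum.inl i) = X (Sum.inl i) + C c * X (Sum.inr i) := rfl

@[simp]
theorem shearVars_inr (c : R) (i : ι) : shearVars c (Sum.inr i) = X (Sum.inr i) := rfl

theorem shearVars_zero : shearVars (ι := ι) (0 : R) = X := by
  funext s
  cases s <;> simp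

variable [Finite ι]

theorem hasSubst_shearVars (c : R) : HasSubst (shearVars (ι := ι) c) :=
  hasSubst_of_constantCoeff_zero fun s => by cases s <;> simp

theorem subst_shearVars_subst_shearVars (c d : R) (f : MvPowerSeries (ι ⊕ ι) R) :
    subst (shearVars c) (subst (shearVars d) f) = subst (shearVars (c + d)) f := by
  have h := hasSubst_shearVars (ι := ι) c
  rw [subst_comp_subst_apply (hasSubst_shearVars d) h]
  congr 1
  funext s
  cases s with
  | inl i =>
    simp only [shearVars_inl, shearVars_inr, subst_add h, subst_mul h, subst_X h, subst_C,
      map_add]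
    ring
  | inr i => simp only [shearVars_inr, subst_X h]

noncomputable def shearEquiv (c : R) : MvPowerSeries (ι ⊕ ι) R ≃ₐ[R] MvPowerSeries (ι ⊕ ι) R :=
  AlgEquiv.ofAlgHom (substAlgHom (hasSubst_shearVars c)) (substAlgHom (hasSubst_shearVars (-c)))
    (AlgHom.ext fun f => by
      simp [subst_shearVars_subst_shearVars, shearVars_zero, subst_self])
    (AlgHom.ext fun f => by
      simp [subst_shearVars_subst_shearVars, shearVars_zero, subst_self])

theorem shearEquiv_X (c : R) (s : ι ⊕ ι) : shearEquiv c (X s) = shearVars c s :=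
  substAlgHom_X (hasSubst_shearVars c) s

end Shear

section Diagonal

variable (ι : Type*) [Fintype ι] (R : Type*) [CommRing R]

theorem ker_killCompl_inr_eq_span :
    RingHom.ker (killCompl (R := R) (Function.Embedding.inr : ι ↪ ι ⊕ ι)) =
      Ideal.span (Set.range fun i => X (Sum.inl i)) := by
  refine le_antisymm (fun f hf => ?_) (Ideal.span_le.mpr ?_)
  · have := mem_span_X_image_of_coeff_eq_zero (Finset.univ.map .inl) (f := f) fun e he => by
      obtain ⟨x, rfl⟩ : e ∈ Set.range (Finsupp.embDomain .inr) := by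
        rw [Finsupp.mem_range_embDomain_iff]
        intro s hs
        cases s with
        | inl i => exact absurd (he _ (by simp)) (Finsupp.mem_support_iff.mp hs)
        | inr i => exact ⟨i, rfl⟩
      rw [← coeff_killCompl, hf, map_zero]
    rwa [Finset.coe_map, Finset.coe_univ, Set.image_univ, ← Set.range_comp] at this
  · rintro _ ⟨i, rfl⟩
    exact killCompl_X_eq_zero (by simp)

theorem isPrime_span_X_inl [IsDomain R] :
    (Ideal.span (Set.range fun i : ι => (X (Sum.inl i) : MvPowerSeries (ι ⊕ ι) R))).IsPrime := by
  have := NoZeroDivisors.to_isDomain (MvPowerSeries ι R)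
  rw [← ker_killCompl_inr_eq_span]
  exact RingHom.ker_isPrime _

variable {ι R} in
theorem isPrime_span_X_inl_sub_X_inr [IsDomain R] :
    (Ideal.span (Set.range fun i : ι =>
      (X (Sum.inl i) - X (Sum.inr i) : MvPowerSeries (ι ⊕ ι) R))).IsPrime := by
  have hmap : Ideal.span (Set.range fun i : ι =>
      (X (Sum.inl i) - X (Sum.inr i) : MvPowerSeries (ι ⊕ ι) R)) =
      (Ideal.span (Set.range fun i => X (Sum.inl i))).map (shearEquiv (-1 : R)) := by
    rw [Ideal.map_span, ← Set.range_comp]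
    exact congrArg (fun g => Ideal.span (Set.range g)) (funext fun i => by
      simp [shearEquiv_X, sub_eq_add_neg])
  rw [hmap]
  have := isPrime_span_X_inl ι R
  exact Ideal.map_isPrime_of_equiv _

end Diagonal

end MvPowerSeries

theorem MvPolynomial.aeval_sub_aeval_mem {σ R A : Type*} [CommRing R] [CommRing A] [Algebra R A]
    {I : Ideal A} {a b : σ → A} (h : ∀ i, a i - b i ∈ I) (p : MvPolynomial σ R) :
    aeval a p - aeval b p ∈ I := by
  rw [← Ideal.Quotient.eq, ← Ideal.Quotient.mkₐ_eq_mk R, MvPolynomial.comp_aeval_apply,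
    MvPolynomial.comp_aeval_apply]
  congr 2
  funext i
  exact Ideal.Quotient.eq.mpr (h i)

theorem Submodule.exists_pow_smul_top_eq_bot {A M : Type*} [CommRing A] [AddCommGroup M]
    [Module A M] [IsArtinian A M] [IsNoetherian A M] {m : Ideal A}
    (hm : m ≤ Ideal.jacobson ⊥) : ∃ k, m ^ k • (⊤ : Submodule A M) = ⊥ := by
  obtain ⟨k, hk⟩ := IsArtinian.monotone_stabilizes
    ⟨fun k => OrderDual.toDual (m ^ k • (⊤ : Submodule A M)),
      fun k l hkl => Submodule.smul_mono_left (Ideal.pow_le_pow_right hkl)⟩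
  refine ⟨k, Submodule.eq_bot_of_le_smul_of_le_jacobson_bot m _ (IsNoetherian.noetherian _) ?_ hm⟩
  rw [← Submodule.mul_smul, ← pow_succ']
  exact le_of_eq (hk (k + 1) k.le_succ)

theorem Ideal.exists_pow_mul_le_of_finiteDimensional {K A : Type*} [Field K] [CommRing A]
    [Algebra K A] {I J m : Ideal A} (hm : m ≤ I.jacobson)
    [FiniteDimensional K (J.map (Ideal.Quotient.mk I))] : ∃ k, m ^ k * J ≤ I := by
  set J' := J.map (Ideal.Quotient.mk I)
  have := isArtinian_of_tower K (M := J') (S := A ⧸ I) inferInstance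
  have := isNoetherian_of_tower K (M := J') (S := A ⧸ I) inferInstance
  have hm' : m.map (Ideal.Quotient.mk I) ≤ Ideal.jacobson ⊥ := by
    rw [← Ideal.map_quotient_self I, ← Ideal.map_jacobson_of_surjective Ideal.Quotient.mk_surjective
      (by rw [Ideal.mk_ker])]
    exact Ideal.map_mono hm
  obtain ⟨k, hk⟩ := Submodule.exists_pow_smul_top_eq_bot (M := J') hm'
  refine ⟨k, ?_⟩
  rw [← Ideal.mk_ker (I := I), ← Ideal.map_eq_bot_iff_le_ker, Ideal.map_mul, Ideal.map_pow]
  have := congrArg (Submodule.map J'.subtype) hk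
  rwa [Submodule.map_smul'', Submodule.map_subtype_top, Submodule.map_bot] at this

theorem Ideal.exists_inf_pow_le_pow_mul {A : Type*} [CommRing A] [IsNoetherianRing A]
    (m D : Ideal A) : ∃ c, ∀ k, D ⊓ m ^ (k + c) ≤ m ^ k * D := by
  obtain ⟨c, hc⟩ := Ideal.exists_pow_inf_eq_pow_smul m D
  refine ⟨c, fun k => ?_⟩
  have := hc (k + c) (Nat.le_add_left c k)
  rw [smul_eq_mul, Ideal.mul_top, Nat.add_sub_cancel] at this
  rw [inf_comm, this]
  exact Submodule.smul_mono le_rfl inf_le_right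

theorem Ideal.radical_eq_of_pow_le_of_le {A : Type*} [CommRing A] {m Q : Ideal A} [m.IsPrime]
    {N : ℕ} (hN : N ≠ 0) (hmQ : m ^ N ≤ Q) (hQm : Q ≤ m) : Q.radical = m := by
  refine le_antisymm ((Ideal.radical_mono hQm).trans_eq ‹m.IsPrime›.radical) ?_
  calc m = (m ^ N).radical := by rw [Ideal.radical_pow m hN, ‹m.IsPrime›.radical]
    _ ≤ Q.radical := Ideal.radical_mono hmQ

theorem maxIdeal_eq_maximalIdeal (n : ℕ) : maxIdeal n = IsLocalRing.maximalIdeal (DPRing n) :=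
  MvPowerSeries.span_range_X_eq_maximalIdeal

theorem diagIdeal_isPrime (n : ℕ) : (diagIdeal n).IsPrime :=
  MvPowerSeries.isPrime_span_X_inl_sub_X_inr

theorem diagIdeal_le_maxIdeal (n : ℕ) : diagIdeal n ≤ maxIdeal n :=
  Ideal.span_le.mpr <| by
    rintro _ ⟨j, rfl⟩
    exact sub_mem (Ideal.subset_span (Set.mem_range_self _))
      (Ideal.subset_span (Set.mem_range_self _))

theorem IDelta_le_diagIdeal (n : ℕ) (F : Fin (2 * n) → MvPolynomial (Fin n) ℂ) :
    IDelta n F ≤ diagIdeal n :=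
  Ideal.span_le.mpr <| by
    rintro _ ⟨i, rfl⟩
    refine MvPolynomial.aeval_sub_aeval_mem (fun j => ?_) (F i)
    exact Ideal.subset_span ⟨j, rfl⟩

theorem primary_decomposition_of_IDelta_general (n : ℕ)
    (F : Fin (2 * n) → MvPolynomial (Fin n) ℂ)
    (hfin : FiniteDimensional ℂ
      ↥((diagIdeal n).map (Ideal.Quotient.mk (IDelta n F)))) :
    (IDelta n F).radical = diagIdeal n ∧
    ∃ Q : Ideal (DPRing n), Q.IsPrimary ∧ Q.radical = maxIdeal n ∧
      IDelta n F = diagIdeal n ⊓ Q := by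
  have hm : (maxIdeal n).IsMaximal := by
    rw [maxIdeal_eq_maximalIdeal]
    exact IsLocalRing.maximalIdeal.isMaximal _
  obtain ⟨k, hk⟩ := Ideal.exists_pow_mul_le_of_finiteDimensional (K := ℂ) (I := IDelta n F)
    (J := diagIdeal n)
    ((maxIdeal_eq_maximalIdeal n).trans_le (IsLocalRing.maximalIdeal_le_jacobson _))
  obtain ⟨c, hc⟩ := Ideal.exists_inf_pow_le_pow_mul (maxIdeal n) (diagIdeal n)
  set Q := IDelta n F ⊔ maxIdeal n ^ (k + 1 + c)
  have hQ : Q.radical = maxIdeal n := Ideal.radical_eq_of_pow_le_of_le (by omega) le_sup_right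
    (sup_le ((IDelta_le_diagIdeal n F).trans (diagIdeal_le_maxIdeal n))
      (Ideal.pow_le_self (by omega)))
  have hIQ : IDelta n F = diagIdeal n ⊓ Q := by
    rw [inf_comm, sup_inf_assoc_of_le _ (IDelta_le_diagIdeal n F), inf_comm, left_eq_sup]
    calc diagIdeal n ⊓ maxIdeal n ^ (k + 1 + c) ≤ maxIdeal n ^ (k + 1) * diagIdeal n := hc _
      _ ≤ maxIdeal n ^ k * diagIdeal n := Ideal.mul_mono_left (Ideal.pow_le_pow_right k.le_succ)
      _ ≤ IDelta n F := hk
  refine ⟨?_, Q, Ideal.isPrimary_of_isMaximal_radical (hQ ▸ hm), hQ, hIQ⟩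
  rw [hIQ, Ideal.radical_inf, (diagIdeal_isPrime n).radical, hQ]
  exact inf_eq_left.mpr (diagIdeal_le_maxIdeal n)

theorem primary_decomposition_of_IDelta (n : ℕ)
    (F : Fin (2 * n) → MvPolynomial (Fin n) ℂ)
    (hF0 : ∀ i, MvPolynomial.eval (0 : Fin n → ℂ) (F i) = 0)
    (hfin : FiniteDimensional ℂ
      ↥((diagIdeal n).map (Ideal.Quotient.mk (IDelta n F))))
    (hpos : 0 < Module.finrank ℂ
      ↥((diagIdeal n).map (Ideal.Quotient.mk (IDelta n F)))) :
    (IDelta n F).radical = diagIdeal n ∧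
    ∃ Q : Ideal (DPRing n), Q.IsPrimary ∧ Q.radical = maxIdeal n ∧
      IDelta n F = diagIdeal n ⊓ Q :=
  primary_decomposition_of_IDelta_general n F hfin

end
end

section
/- Let (R, m) be a Noetherian local ring, let P be a prime ideal of R with P ≠ m, and let I ⊆ P be an ideal with I ≠ P such that the R-module P/I has finite length. Then there exists an m-primary ideal Q of R (an ideal Q that is primary with radical equal to m) such that I = P ∩ Q. -/
/-!
Since `P/I` has finite length, Nakayama's lemma gives `m ^ N • (P/I) = 0`, i.e. `m ^ N P ⊆ I`.
Artin–Rees upgrades this to `m ^ n ∩ P ⊆ I` for all large `n`, and then `Q = I + m ^ n` works: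
it lies between `m ^ n` and `m`, so it is `m`-primary, and `P ∩ (I + m ^ n) = I + (P ∩ m ^ n) = I`
by the modular law.
-/

open IsLocalRing

theorem Submodule.exists_pow_smul_top_eq_bot_of_le_jacobson {R M : Type*} [CommRing R]
    [AddCommGroup M] [Module R M] [IsNoetherian R M] [IsArtinian R M] {J : Ideal R}
    (hJ : J ≤ Ideal.jacobson ⊥) : ∃ n : ℕ, (J ^ n • ⊤ : Submodule R M) = ⊥ := by
  obtain ⟨n, hn⟩ := IsArtinian.monotone_stabilizes (R := R) (M := M)
    ⟨fun n ↦ OrderDual.toDual (J ^ n • ⊤ : Submodule R M),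
      fun _ _ h ↦ Submodule.smul_mono (Ideal.pow_le_pow_right h) le_rfl⟩
  have hstable : (J ^ n • ⊤ : Submodule R M) = J • J ^ n • ⊤ := by
    rw [← Submodule.smul_assoc, smul_eq_mul, ← pow_succ']
    exact hn (n + 1) n.le_succ
  exact ⟨n, Submodule.eq_bot_of_le_smul_of_le_jacobson_bot J _
    (IsNoetherian.noetherian _) hstable.le hJ⟩

theorem Ideal.mul_le_of_smul_top_map_mk_eq_bot {R : Type*} [CommRing R] {I P J : Ideal R}
    (h : (J • ⊤ : Submodule R (P.map (Ideal.Quotient.mk I))) = ⊥) : J * P ≤ I := by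
  refine Ideal.mul_le.mpr fun a ha p hp ↦ ?_
  have hzero : a • (⟨Ideal.Quotient.mk I p, Ideal.mem_map_of_mem _ hp⟩ :
      P.map (Ideal.Quotient.mk I)) = 0 := by
    rw [← Submodule.mem_bot R, ← h]
    exact Submodule.smul_mem_smul ha Submodule.mem_top
  rw [← Ideal.Quotient.eq_zero_iff_mem, map_mul]
  exact congrArg Subtype.val hzero

theorem Ideal.exists_pow_inf_le_of_pow_mul_le {R : Type*} [CommRing R] [IsNoetherianRing R]
    {J P I : Ideal R} {N : ℕ} (h : J ^ N * P ≤ I) : ∃ k : ℕ, ∀ n ≥ k, J ^ n ⊓ P ≤ I := by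
  obtain ⟨k, hk⟩ := Ideal.exists_pow_inf_eq_pow_smul J (P : Submodule R R)
  refine ⟨N + k, fun n hn ↦ ?_⟩
  calc J ^ n ⊓ P = J ^ (n - k) • (J ^ k • ⊤ ⊓ P) := by
        simpa only [smul_eq_mul, Ideal.mul_top] using hk n (by omega)
    _ ≤ J ^ N * P := by
        rw [smul_eq_mul]
        exact Ideal.mul_mono (Ideal.pow_le_pow_right (by omega)) inf_le_right
    _ ≤ I := h

theorem Ideal.radical_sup_pow_eq {R : Type*} [CommRing R] {I M : Ideal R} [M.IsMaximal]
    (hIM : I ≤ M) {n : ℕ} (hn : n ≠ 0) : (I ⊔ M ^ n).radical = M := by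
  refine le_antisymm ?_ fun x hx ↦ ⟨n, Ideal.mem_sup_right (Ideal.pow_mem_pow hx n)⟩
  calc (I ⊔ M ^ n).radical ≤ M.radical := Ideal.radical_mono (sup_le hIM (Ideal.pow_le_self hn))
    _ = M := Ideal.IsPrime.radical inferInstance

theorem exists_primary_component_general {R : Type*} [CommRing R] [IsNoetherianRing R]
    [IsLocalRing R] (P I : Ideal R) (hP : P.IsPrime)
    (hIP : I ≤ P)
    (hlen : IsFiniteLength R ↥(P.map (Ideal.Quotient.mk I))) :
    ∃ Q : Ideal R, Q.IsPrimary ∧ Q.radical = IsLocalRing.maximalIdeal R ∧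
      I = P ⊓ Q := by
  obtain ⟨_, _⟩ := isFiniteLength_iff_isNoetherian_isArtinian.mp hlen
  obtain ⟨N, hN⟩ := Submodule.exists_pow_smul_top_eq_bot_of_le_jacobson
    (M := P.map (Ideal.Quotient.mk I)) (maximalIdeal_le_jacobson (⊥ : Ideal R))
  obtain ⟨k, hk⟩ := Ideal.exists_pow_inf_le_of_pow_mul_le
    (Ideal.mul_le_of_smul_top_map_mk_eq_bot hN)
  have hrad : (I ⊔ maximalIdeal R ^ (k + 1)).radical = maximalIdeal R :=
    Ideal.radical_sup_pow_eq (hIP.trans (le_maximalIdeal hP.ne_top)) k.succ_ne_zero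
  refine ⟨I ⊔ maximalIdeal R ^ (k + 1), ?_, hrad, ?_⟩
  · exact Ideal.isPrimary_of_isMaximal_radical (by rw [hrad]; infer_instance)
  · rw [inf_comm, sup_inf_assoc_of_le _ hIP, sup_eq_left.mpr (hk _ k.le_succ)]

theorem exists_primary_component {R : Type*} [CommRing R] [IsNoetherianRing R]
    [IsLocalRing R] (P I : Ideal R) (hP : P.IsPrime)
    (hPm : P ≠ IsLocalRing.maximalIdeal R) (hIP : I ≤ P) (hIneP : I ≠ P)
    (hlen : IsFiniteLength R ↥(P.map (Ideal.Quotient.mk I))) :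
    ∃ Q : Ideal R, Q.IsPrimary ∧ Q.radical = IsLocalRing.maximalIdeal R ∧
      I = P ⊓ Q :=
  exists_primary_component_general P I hP hIP hlen
end

section
/- Let f : ℂⁿ → ℂ^{2n} be a polynomial map with f(0)=0 and suppose Q is an ideal of R = ℂ⟦x₁,…,xₙ,x₁',…,xₙ'⟧, primary with radical equal to the maximal ideal of R, such that I_Δ = D ∩ Q. Then dim_ℂ(R/Q) and dim_ℂ(R/(D+Q)) are finite and dim_ℂ(D/I_Δ) = dim_ℂ(R/Q) − dim_ℂ(R/(D+Q)). (Since dim_ℂ(D/I_Δ) = 2·d(f) for A-finite f, this gives d(f) = ½·(dim_ℂ R/Q − dim_ℂ R/(D+Q)).) -/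
/-!
Since `√Q = 𝔪` is finitely generated, `𝔪 ^ k ≤ Q` for some `k`, and
`R ⧸ 𝔪 ^ k` is spanned by the monomials of total degree `< k`; hence `R ⧸ Q` and its quotient
`R ⧸ (D + Q)` are finite dimensional. As `I_Δ = D ∩ Q`, the projection `R ⧸ I_Δ → R ⧸ Q` maps
`D ⧸ I_Δ` isomorphically onto `(D + Q) ⧸ Q`, the kernel of `R ⧸ Q → R ⧸ (D + Q)`, and the
formula is rank–nullity.
-/

set_option synthInstance.maxHeartbeats 1000000

noncomputable section

open MvPowerSeries

namespace MvPowerSeries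

variable {σ R : Type*} [Fintype σ]

theorem exists_eq_sum_X_mul_of_le_order [CommSemiring R] {f : MvPowerSeries σ R} {k : ℕ}
    (hf : ((k + 1 : ℕ) : ℕ∞) ≤ f.order) :
    ∃ g : σ → MvPowerSeries σ R, (∀ i, (k : ℕ∞) ≤ (g i).order) ∧ f = ∑ i, X i * g i := by
  classical
  -- each monomial of `f` goes to `X i * g i` for one variable `i` occurring in it;
  -- `Option σ` lets `epsilon` work without `Nonempty σ`
  let pick : (σ →₀ ℕ) → Option σ := fun e =>
    Classical.epsilon fun o => ∃ i, o = some i ∧ e i ≠ 0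
  have pick_spec {e : σ →₀ ℕ} (he : e ≠ 0) : ∃ i, pick e = some i ∧ e i ≠ 0 := by
    obtain ⟨i, hi⟩ := Finsupp.ne_iff.mp he
    exact Classical.epsilon_spec (p := fun o => ∃ i, o = some i ∧ e i ≠ 0)
      ⟨some i, i, rfl, hi⟩
  have hf0 {d : σ →₀ ℕ} (hd : d.degree < k + 1) : coeff d f = 0 :=
    coeff_of_lt_order ((Nat.cast_lt.mpr hd).trans_le hf)
  let g : σ → MvPowerSeries σ R := fun i d =>
    if pick (d + Finsupp.single i 1) = some i then coeff (d + Finsupp.single i 1) f else 0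
  have coeff_g (i : σ) (d : σ →₀ ℕ) : coeff d (g i) =
      if pick (d + Finsupp.single i 1) = some i then coeff (d + Finsupp.single i 1) f else 0 :=
    rfl
  refine ⟨g, fun i => nat_le_order fun d hd => ?_, ?_⟩
  · rw [coeff_g, hf0 (by simpa using hd), ite_self]
  · ext e
    simp only [map_sum, X_def, coeff_monomial_mul, one_mul, coeff_g]
    by_cases he : e = 0
    · subst he
      simp [hf0]
    · obtain ⟨j, hj, hej⟩ := pick_spec he
      have hle : Finsupp.single j 1 ≤ e :=
        Finsupp.single_le_iff.mpr (Nat.one_le_iff_ne_zero.mpr hej)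
      rw [Finset.sum_eq_single j]
      · rw [if_pos hle, tsub_add_cancel_of_le hle, if_pos hj]
      · intro i _ hi
        split_ifs with hle' hpick
        · rw [tsub_add_cancel_of_le hle', hj, Option.some_inj] at hpick
          exact absurd hpick.symm hi
        · rfl
        · rfl
      · simp

theorem mem_span_X_pow_of_le_order [CommSemiring R] {f : MvPowerSeries σ R} {k : ℕ}
    (hf : (k : ℕ∞) ≤ f.order) : f ∈ Ideal.span (Set.range X) ^ k := by
  induction k generalizing f with
  | zero => simp
  | succ k ih =>
    obtain ⟨g, hg, rfl⟩ := exists_eq_sum_X_mul_of_le_order hf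
    rw [pow_succ']
    exact Ideal.sum_mem _ fun i _ => Ideal.mul_mem_mul (Ideal.subset_span ⟨i, rfl⟩) (ih (hg i))

theorem finite_quotient_of_span_X_pow_le [CommRing R] {J : Ideal (MvPowerSeries σ R)} {k : ℕ}
    (hJ : Ideal.span (Set.range X) ^ k ≤ J) : Module.Finite R (MvPowerSeries σ R ⧸ J) := by
  let φ : MvPolynomial.restrictTotalDegree σ R k →ₗ[R] MvPowerSeries σ R ⧸ J :=
    (Ideal.Quotient.mkₐ R J).toLinearMap ∘ₗ
      (MvPolynomial.coeToMvPowerSeries.algHom R).toLinearMap ∘ₗ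
      (MvPolynomial.restrictTotalDegree σ R k).subtype
  refine Module.Finite.of_surjective φ fun x => ?_
  obtain ⟨f, rfl⟩ := Ideal.Quotient.mk_surjective x
  have htrunc : truncTotal (k + 1) f - f ∈ J := by
    refine hJ (mem_span_X_pow_of_le_order (nat_le_order fun d hd => ?_))
    rw [map_sub, MvPolynomial.coeff_coe, coeff_truncTotal _ (by omega), sub_self]
  refine ⟨⟨truncTotal (k + 1) f, (MvPolynomial.mem_restrictTotalDegree _ _ _).mpr
    (Nat.lt_succ_iff.mp (totalDegree_truncTotal_lt f k.succ_ne_zero))⟩, ?_⟩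
  exact Ideal.Quotient.eq.mpr htrunc

end MvPowerSeries

namespace Ideal

variable (K : Type*) {A : Type*} [CommRing A]

def mapMkLinearEquivOfInfLe [CommRing K] [Algebra K A] {I Q D : Ideal A} (hIQ : I ≤ Q)
    (hDQ : D ⊓ Q ≤ I) :
    D.map (Quotient.mk I) ≃ₗ[K] D.map (Quotient.mk Q) := by
  have mem_map {J : Ideal A} {x : A ⧸ J} :
      x ∈ D.map (Quotient.mk J) ↔ ∃ r ∈ D, Quotient.mk J r = x :=
    mem_map_iff_of_surjective _ Quotient.mk_surjective
  refine LinearEquiv.ofBijective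
    ((Quotient.factorₐ K hIQ).toLinearMap.restrict
      (p := (D.map (Quotient.mk I)).restrictScalars K)
      (q := (D.map (Quotient.mk Q)).restrictScalars K) fun x hx => ?_) ⟨?_, ?_⟩
  · obtain ⟨r, hr, rfl⟩ := mem_map.mp hx
    exact mem_map.mpr ⟨r, hr, rfl⟩
  · refine (injective_iff_map_eq_zero _).mpr ?_
    rintro ⟨x, hx⟩ hx0
    obtain ⟨r, hr, rfl⟩ := mem_map.mp hx
    have hrQ : r ∈ Q := Quotient.eq_zero_iff_mem.mp (congrArg Subtype.val hx0)
    exact Subtype.ext (Quotient.eq_zero_iff_mem.mpr (hDQ ⟨hr, hrQ⟩))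
  · rintro ⟨y, hy⟩
    obtain ⟨r, hr, rfl⟩ := mem_map.mp hy
    exact ⟨⟨Quotient.mk I r, mem_map.mpr ⟨r, hr, rfl⟩⟩, rfl⟩

theorem finrank_map_mk_add_finrank_quotient_sup [Field K] [Algebra K A] (Q D : Ideal A)
    [FiniteDimensional K (A ⧸ Q)] :
    Module.finrank K (D.map (Quotient.mk Q)) + Module.finrank K (A ⧸ (D ⊔ Q)) =
      Module.finrank K (A ⧸ Q) := by
  let T := D.map (Quotient.mk Q)
  have e : ((A ⧸ Q) ⧸ T.restrictScalars K) ≃ₗ[K] A ⧸ (D ⊔ Q) :=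
    (Submodule.Quotient.restrictScalarsEquiv K T).trans
      ((DoubleQuot.quotQuotEquivQuotSupₐ K Q D).toLinearEquiv.trans
        (quotientEquivAlgOfEq K (sup_comm Q D)).toLinearEquiv)
  rw [← e.finrank_eq, add_comm]
  exact Submodule.finrank_quotient_add_finrank (T.restrictScalars K)

end Ideal

theorem artin_nagata_from_primary_component_general (n : ℕ)
    (F : Fin (2 * n) → MvPolynomial (Fin n) ℂ)
    (Q : Ideal (DPRing n)) (hQrad : Q.radical = maxIdeal n)
    (hdec : IDelta n F = diagIdeal n ⊓ Q) :
    FiniteDimensional ℂ (DPRing n ⧸ Q) ∧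
    FiniteDimensional ℂ (DPRing n ⧸ (diagIdeal n ⊔ Q)) ∧
    FiniteDimensional ℂ
      ↥((diagIdeal n).map (Ideal.Quotient.mk (IDelta n F))) ∧
    (Module.finrank ℂ
        ↥((diagIdeal n).map (Ideal.Quotient.mk (IDelta n F))) : ℤ) =
      (Module.finrank ℂ (DPRing n ⧸ Q) : ℤ) -
        (Module.finrank ℂ (DPRing n ⧸ (diagIdeal n ⊔ Q)) : ℤ) := by
  obtain ⟨k, hk⟩ : ∃ k, maxIdeal n ^ k ≤ Q := hQrad ▸
    Q.exists_radical_pow_le_of_fg (hQrad ▸ Submodule.fg_span (Set.finite_range _))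
  have : FiniteDimensional ℂ (DPRing n ⧸ Q) := finite_quotient_of_span_X_pow_le hk
  let e := Ideal.mapMkLinearEquivOfInfLe ℂ (hdec.le.trans inf_le_right) hdec.ge
  refine ⟨inferInstance,
    Module.Finite.of_surjective (Ideal.Quotient.factorₐ ℂ le_sup_right).toLinearMap
      (Ideal.Quotient.factor_surjective le_sup_right),
    e.symm.finiteDimensional, ?_⟩
  rw [e.finrank_eq, ← Ideal.finrank_map_mk_add_finrank_quotient_sup]
  push_cast
  ring

theorem artin_nagata_from_primary_component (n : ℕ)
    (F : Fin (2 * n) → MvPolynomial (Fin n) ℂ)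
    (hF0 : ∀ i, MvPolynomial.eval (0 : Fin n → ℂ) (F i) = 0)
    (Q : Ideal (DPRing n)) (hQ : Q.IsPrimary) (hQrad : Q.radical = maxIdeal n)
    (hdec : IDelta n F = diagIdeal n ⊓ Q) :
    FiniteDimensional ℂ (DPRing n ⧸ Q) ∧
    FiniteDimensional ℂ (DPRing n ⧸ (diagIdeal n ⊔ Q)) ∧
    FiniteDimensional ℂ
      ↥((diagIdeal n).map (Ideal.Quotient.mk (IDelta n F))) ∧
    (Module.finrank ℂ
        ↥((diagIdeal n).map (Ideal.Quotient.mk (IDelta n F))) : ℤ) =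
      (Module.finrank ℂ (DPRing n ⧸ Q) : ℤ) -
        (Module.finrank ℂ (DPRing n ⧸ (diagIdeal n ⊔ Q)) : ℤ) :=
  artin_nagata_from_primary_component_general n F Q hQrad hdec

end
end
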